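/- There exists a universal constant C > 0 with the following property. For every integer d ≥ 1, every probability density p₀ on ℝ^d, every measurable r : ℝ^d → [0,∞) with 0 < ∫ r(x) p₀(x) dx < ∞, every R > 0 with both ∫_{‖x‖₂ < R} p₀(x) dx > 1/2 and ∫_{‖x‖₂ < R} p₀^r(x) dx > 1/2, every t ∈ (0,1), and every y ∈ ℝ^d, the gradient of the conditional reward satisfies ‖∇ρ_t(y)‖₂ ≤ C·ρ_t(y)·( (‖y‖₂ + √t·R)/(1−t) + d/√(1−t) ). -/

import Mathlib

/-!
Write `ρ_t = N / Q`, where `N` and `Q` are the Gaussian smoothings `∫ f(x) G_t(·, x) dx` of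
`f = r p₀` and `f = p₀`. For any nonnegative integrable `f` putting more than half of its mass on
the ball `‖x‖ < R`, differentiating under the integral gives
`‖∇(∫ f G_t(·, x))(y)‖ ≤ (1 - t)⁻¹ ∫ f(x) G_t(y, x) ‖y - √t x‖ dx`.
With `s = 1 - t`, `a = ‖y‖ + √t R` and `u = ‖y - √t x‖`, the elementary bound
`u e^{-u²/2s} ≤ a e^{-u²/2s} + √s e^{-a²/2s}` splits this integral into `a` times the smoothing
plus a tail term `√s ⋅ c e^{-a²/2s} ∫ f`, `c` the kernel's normalising constant. On the ball the
kernel is at least `c e^{-a²/2s}`, so the half-mass condition bounds the tail by twice `√s` times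
the smoothing. Both `N` and `Q` thus have logarithmic gradient at most `(a + 2√(1 - t))/(1 - t)`,
and the quotient rule doubles this bound.
-/

open MeasureTheory Real

/-- The Gaussian kernel `G_t(y,x) = (2π(1−t))^{−d/2} exp(−‖y−√t·x‖²/(2(1−t)))`. -/
noncomputable def gaussKernel (d : ℕ) (t : ℝ) (y x : EuclideanSpace ℝ (Fin d)) : ℝ :=
  (2 * π * (1 - t)) ^ (-(d : ℝ) / 2) *
    Real.exp (-‖y - Real.sqrt t • x‖ ^ 2 / (2 * (1 - t)))

/-- The smoothed density `q_t(y) = ∫ p₀(x) G_t(y,x) dx`. -/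
noncomputable def smoothed (d : ℕ) (p₀ : EuclideanSpace ℝ (Fin d) → ℝ) (t : ℝ)
    (y : EuclideanSpace ℝ (Fin d)) : ℝ :=
  ∫ x, p₀ x * gaussKernel d t y x

/-- The posterior density `π_t(x|y) = p₀(x) G_t(y,x)/q_t(y)`. -/
noncomputable def post (d : ℕ) (p₀ : EuclideanSpace ℝ (Fin d) → ℝ) (t : ℝ)
    (x y : EuclideanSpace ℝ (Fin d)) : ℝ :=
  p₀ x * gaussKernel d t y x / smoothed d p₀ t y

/-- The conditional reward `ρ_t(y) = ∫ r(x) π_t(x|y) dx`. -/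
noncomputable def condReward (d : ℕ) (p₀ r : EuclideanSpace ℝ (Fin d) → ℝ) (t : ℝ)
    (y : EuclideanSpace ℝ (Fin d)) : ℝ :=
  ∫ x, r x * post d p₀ t x y

/-- The reward-reweighted density `p₀^r(x) = r(x)p₀(x)/∫ r p₀`. -/
noncomputable def reweighted (d : ℕ) (p₀ r : EuclideanSpace ℝ (Fin d) → ℝ)
    (x : EuclideanSpace ℝ (Fin d)) : ℝ :=
  r x * p₀ x / ∫ x', r x' * p₀ x'

/-- A probability density on `ℝ^d`: measurable, nonnegative, integrating to one. -/
def IsDensity {d : ℕ} (p : EuclideanSpace ℝ (Fin d) → ℝ) : Prop :=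
  Measurable p ∧ (∀ x, 0 ≤ p x) ∧ ∫ x, p x = 1

theorem mul_exp_neg_sq_div_le_sqrt {s : ℝ} (hs : 0 < s) (u : ℝ) :
    u * exp (-u ^ 2 / (2 * s)) ≤ √s := by
  obtain ⟨σ, hσ, rfl⟩ : ∃ σ, 0 < σ ∧ s = σ ^ 2 := ⟨√s, sqrt_pos.2 hs, (sq_sqrt hs.le).symm⟩
  rw [sqrt_sq hσ.le, neg_div, exp_neg, ← div_eq_mul_inv, div_le_iff₀ (exp_pos _)]
  calc u ≤ σ * (u ^ 2 / (2 * σ ^ 2) + 1) := by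
        have : σ * (u ^ 2 / (2 * σ ^ 2) + 1) - u = ((u - σ) ^ 2 + σ ^ 2) / (2 * σ) := by
          field_simp; ring
        have : 0 ≤ ((u - σ) ^ 2 + σ ^ 2) / (2 * σ) := by positivity
        linarith
    _ ≤ σ * exp (u ^ 2 / (2 * σ ^ 2)) := by gcongr; exact add_one_le_exp _

theorem mul_exp_neg_sq_div_le_add {s a u : ℝ} (hs : 0 < s) (ha : 0 ≤ a) :
    u * exp (-u ^ 2 / (2 * s)) ≤ a * exp (-u ^ 2 / (2 * s)) + √s * exp (-a ^ 2 / (2 * s)) := by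
  rcases le_total u a with hua | hau
  · calc u * exp (-u ^ 2 / (2 * s)) ≤ a * exp (-u ^ 2 / (2 * s)) := by gcongr
      _ ≤ _ := le_add_of_nonneg_right (by positivity)
  · have hsplit :
        exp (-u ^ 2 / (2 * s)) ≤ exp (-(u - a) ^ 2 / (2 * s)) * exp (-a ^ 2 / (2 * s)) := by
      rw [← exp_add, ← add_div, exp_le_exp, div_le_div_iff_of_pos_right (by positivity)]
      nlinarith [mul_nonneg ha (sub_nonneg.2 hau)]
    calc u * exp (-u ^ 2 / (2 * s))
        = a * exp (-u ^ 2 / (2 * s)) + (u - a) * exp (-u ^ 2 / (2 * s)) := by ring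
      _ ≤ a * exp (-u ^ 2 / (2 * s))
            + (u - a) * (exp (-(u - a) ^ 2 / (2 * s)) * exp (-a ^ 2 / (2 * s))) := by
          gcongr
      _ ≤ a * exp (-u ^ 2 / (2 * s)) + √s * exp (-a ^ 2 / (2 * s)) := by
          rw [← mul_assoc]
          gcongr
          exact mul_exp_neg_sq_div_le_sqrt hs _

theorem norm_gradient_eq_norm_fderiv {𝕜 F : Type*} [RCLike 𝕜] [NormedAddCommGroup F]
    [InnerProductSpace 𝕜 F] [CompleteSpace F] (f : F → 𝕜) (x : F) :
    ‖gradient f x‖ = ‖fderiv 𝕜 f x‖ := by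
  rw [← toDual_gradient, LinearIsometryEquiv.norm_map]

theorem norm_fderiv_div_le {E : Type*} [NormedAddCommGroup E] [NormedSpace ℝ E]
    {N Q : E → ℝ} {y : E} {B : ℝ} (hN : DifferentiableAt ℝ N y) (hQ : DifferentiableAt ℝ Q y)
    (hN' : ‖fderiv ℝ N y‖ ≤ B * N y) (hQ' : ‖fderiv ℝ Q y‖ ≤ B * Q y)
    (hN0 : 0 ≤ N y) (hQ0 : 0 < Q y) :
    ‖fderiv ℝ (fun z => N z / Q z) y‖ ≤ 2 * B * (N y / Q y) := by
  have hderiv := hN.hasFDerivAt.mul ((hasDerivAt_inv hQ0.ne').comp_hasFDerivAt y hQ.hasFDerivAt)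
  rw [show (fun z => N z / Q z) = N * (fun y => y⁻¹) ∘ Q from funext fun z => div_eq_mul_inv _ _,
    hderiv.fderiv]
  calc ‖N y • (-(Q y ^ 2)⁻¹) • fderiv ℝ Q y + (Q y)⁻¹ • fderiv ℝ N y‖
      ≤ N y * ((Q y ^ 2)⁻¹ * ‖fderiv ℝ Q y‖) + (Q y)⁻¹ * ‖fderiv ℝ N y‖ := by
        refine (norm_add_le _ _).trans_eq ?_
        rw [norm_smul, norm_smul, norm_smul, norm_neg, Real.norm_of_nonneg hN0,
          Real.norm_of_nonneg (by positivity), Real.norm_of_nonneg (by positivity)]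
    _ ≤ N y * ((Q y ^ 2)⁻¹ * (B * Q y)) + (Q y)⁻¹ * (B * N y) := by gcongr
    _ = 2 * B * (N y / Q y) := by field_simp; ring

section GaussKernel

variable {d : ℕ} {t : ℝ}

theorem gaussKernel_pos (ht : t < 1) (y x : EuclideanSpace ℝ (Fin d)) :
    0 < gaussKernel d t y x := by
  have : 0 < 1 - t := sub_pos.2 ht
  unfold gaussKernel
  positivity

theorem gaussKernel_le (ht : t < 1) (y x : EuclideanSpace ℝ (Fin d)) :
    gaussKernel d t y x ≤ (2 * π * (1 - t)) ^ (-(d : ℝ) / 2) := by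
  have : 0 < 1 - t := sub_pos.2 ht
  unfold gaussKernel
  refine mul_le_of_le_one_right (by positivity) (exp_le_one_iff.2 ?_)
  exact div_nonpos_of_nonpos_of_nonneg (neg_nonpos.2 (sq_nonneg _)) (by positivity)

theorem continuous_gaussKernel (y : EuclideanSpace ℝ (Fin d)) : Continuous (gaussKernel d t y) := by
  unfold gaussKernel
  fun_prop

theorem gaussKernel_ge_of_norm_le (ht : t < 1) {R : ℝ} (y : EuclideanSpace ℝ (Fin d))
    {x : EuclideanSpace ℝ (Fin d)} (hx : ‖x‖ ≤ R) :
    (2 * π * (1 - t)) ^ (-(d : ℝ) / 2) * exp (-(‖y‖ + √t * R) ^ 2 / (2 * (1 - t))) ≤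
      gaussKernel d t y x := by
  have : 0 < 1 - t := sub_pos.2 ht
  unfold gaussKernel
  gcongr
  calc ‖y - √t • x‖ ≤ ‖y‖ + ‖√t • x‖ := norm_sub_le _ _
    _ ≤ ‖y‖ + √t * R := by
      rw [norm_smul, norm_of_nonneg (sqrt_nonneg t)]
      gcongr

theorem gaussKernel_mul_norm_le_add (ht : t < 1) {a : ℝ} (ha : 0 ≤ a)
    (y x : EuclideanSpace ℝ (Fin d)) :
    gaussKernel d t y x * ‖y - √t • x‖ ≤ a * gaussKernel d t y x +
      √(1 - t) * ((2 * π * (1 - t)) ^ (-(d : ℝ) / 2) * exp (-a ^ 2 / (2 * (1 - t)))) := by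
  have hc : 0 ≤ (2 * π * (1 - t)) ^ (-(d : ℝ) / 2) := by
    have : 0 < 1 - t := sub_pos.2 ht
    positivity
  have := mul_le_mul_of_nonneg_left
    (mul_exp_neg_sq_div_le_add (u := ‖y - √t • x‖) (sub_pos.2 ht) ha) hc
  unfold gaussKernel
  linarith

theorem gaussKernel_mul_norm_le (ht : t < 1) (y x : EuclideanSpace ℝ (Fin d)) :
    gaussKernel d t y x * ‖y - √t • x‖ ≤ (2 * π * (1 - t)) ^ (-(d : ℝ) / 2) * √(1 - t) := by
  have hc : 0 ≤ (2 * π * (1 - t)) ^ (-(d : ℝ) / 2) := by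
    have : 0 < 1 - t := sub_pos.2 ht
    positivity
  have := mul_le_mul_of_nonneg_left
    (mul_exp_neg_sq_div_le_sqrt (sub_pos.2 ht) ‖y - √t • x‖) hc
  unfold gaussKernel
  linarith

noncomputable def gaussKernelFDeriv (d : ℕ) (t : ℝ) (y x : EuclideanSpace ℝ (Fin d)) :
    EuclideanSpace ℝ (Fin d) →L[ℝ] ℝ :=
  ((1 - t)⁻¹ * gaussKernel d t y x) • innerSL ℝ (√t • x - y)

theorem hasFDerivAt_gaussKernel (y x : EuclideanSpace ℝ (Fin d)) :
    HasFDerivAt (gaussKernel d t · x) (gaussKernelFDeriv d t y x) y := by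
  have h := ((((hasFDerivAt_id y).sub_const (√t • x)).norm_sq.neg.mul_const
    (2 * (1 - t))⁻¹).exp).const_mul ((2 * π * (1 - t)) ^ (-(d : ℝ) / 2))
  refine h.congr_fderiv ?_
  ext v
  simp only [gaussKernelFDeriv, gaussKernel, div_eq_mul_inv, neg_mul, id_eq, Pi.neg_apply,
    mul_inv_rev, map_sub, map_smul, ContinuousLinearMap.comp_id, smul_neg, neg_apply, smul_apply,
    sub_apply, coe_innerSL_apply, smul_eq_mul, nsmul_eq_mul, Nat.cast_ofNat]
  ring

theorem norm_gaussKernelFDeriv (ht : t < 1) (y x : EuclideanSpace ℝ (Fin d)) :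
    ‖gaussKernelFDeriv d t y x‖ = (1 - t)⁻¹ * (gaussKernel d t y x * ‖y - √t • x‖) := by
  have : 0 < 1 - t := sub_pos.2 ht
  rw [gaussKernelFDeriv, norm_smul, innerSL_apply_norm, norm_sub_rev,
    norm_of_nonneg (by positivity [gaussKernel_pos ht y x]), mul_assoc]

theorem continuous_gaussKernelFDeriv (y : EuclideanSpace ℝ (Fin d)) :
    Continuous (gaussKernelFDeriv d t y) := by
  unfold gaussKernelFDeriv
  have := continuous_gaussKernel (t := t) y
  fun_prop

end GaussKernel

section Smoothing

variable {d : ℕ} {t : ℝ} {f : EuclideanSpace ℝ (Fin d) → ℝ}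

theorem integrable_mul_gaussKernel (hf : Integrable f) (ht : t < 1)
    (y : EuclideanSpace ℝ (Fin d)) : Integrable (fun x => f x * gaussKernel d t y x) :=
  hf.mul_bdd (continuous_gaussKernel y).aestronglyMeasurable <| ae_of_all _ fun x => by
    rw [norm_of_nonneg (gaussKernel_pos ht y x).le]
    exact gaussKernel_le ht y x

theorem hasFDerivAt_smoothed (hf : Integrable f) (ht : t < 1) (y : EuclideanSpace ℝ (Fin d)) :
    HasFDerivAt (smoothed d f t) (∫ x, f x • gaussKernelFDeriv d t y x) y := by
  have hbound : ∀ z x, ‖f x • gaussKernelFDeriv d t z x‖ ≤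
      ‖f x‖ * ((1 - t)⁻¹ * ((2 * π * (1 - t)) ^ (-(d : ℝ) / 2) * √(1 - t))) := by
    intro z x
    have : 0 < 1 - t := sub_pos.2 ht
    rw [norm_smul, norm_gaussKernelFDeriv ht]
    exact mul_le_mul_of_nonneg_left (mul_le_mul_of_nonneg_left
      (gaussKernel_mul_norm_le ht z x) (by positivity)) (norm_nonneg _)
  exact hasFDerivAt_integral_of_dominated_of_fderiv_le Filter.univ_mem
    (Filter.Eventually.of_forall fun z => (integrable_mul_gaussKernel hf ht z).aestronglyMeasurable)
    (integrable_mul_gaussKernel hf ht y)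
    (hf.aestronglyMeasurable.smul (continuous_gaussKernelFDeriv y).aestronglyMeasurable)
    (ae_of_all _ fun x z _ => hbound z x) (hf.norm.mul_const _)
    (ae_of_all _ fun x z _ => (hasFDerivAt_gaussKernel z x).const_mul (f x))

theorem norm_fderiv_smoothed_le_integral (hf0 : ∀ x, 0 ≤ f x) (hf : Integrable f) (ht : t < 1)
    (y : EuclideanSpace ℝ (Fin d)) :
    ‖fderiv ℝ (smoothed d f t) y‖ ≤
      (1 - t)⁻¹ * ∫ x, f x * (gaussKernel d t y x * ‖y - √t • x‖) := by
  rw [(hasFDerivAt_smoothed hf ht y).fderiv, ← integral_const_mul]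
  refine (norm_integral_le_integral_norm _).trans_eq (integral_congr_ae (ae_of_all _ fun x => ?_))
  simp only [norm_smul, norm_gaussKernelFDeriv ht, norm_of_nonneg (hf0 x)]
  ring

theorem setIntegral_mul_le_smoothed (hf0 : ∀ x, 0 ≤ f x) (hf : Integrable f) (ht : t < 1)
    (y : EuclideanSpace ℝ (Fin d)) (R : ℝ) :
    (2 * π * (1 - t)) ^ (-(d : ℝ) / 2) * exp (-(‖y‖ + √t * R) ^ 2 / (2 * (1 - t))) *
      ∫ x in {x : EuclideanSpace ℝ (Fin d) | ‖x‖ < R}, f x ≤ smoothed d f t y := by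
  rw [← integral_const_mul]
  calc _ ≤ ∫ x in {x : EuclideanSpace ℝ (Fin d) | ‖x‖ < R}, f x * gaussKernel d t y x := by
        refine setIntegral_mono_on (hf.const_mul _).integrableOn
          (integrable_mul_gaussKernel hf ht y).integrableOn
          (measurableSet_lt continuous_norm.measurable measurable_const) fun x hx => ?_
        rw [mul_comm]
        gcongr
        · exact hf0 x
        · exact gaussKernel_ge_of_norm_le ht y (le_of_lt hx)
    _ ≤ smoothed d f t y :=
        setIntegral_le_integral (integrable_mul_gaussKernel hf ht y)
          (ae_of_all _ fun x => mul_nonneg (hf0 x) (gaussKernel_pos ht y x).le)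

theorem integral_mul_gaussKernel_mul_norm_le (hf0 : ∀ x, 0 ≤ f x) (hf : Integrable f)
    (ht : t < 1) {a : ℝ} (ha : 0 ≤ a) (y : EuclideanSpace ℝ (Fin d)) :
    ∫ x, f x * (gaussKernel d t y x * ‖y - √t • x‖) ≤ a * smoothed d f t y +
      √(1 - t) * ((2 * π * (1 - t)) ^ (-(d : ℝ) / 2) * exp (-a ^ 2 / (2 * (1 - t)))) *
        ∫ x, f x := by
  have hint := integrable_mul_gaussKernel hf ht y
  rw [smoothed, ← integral_const_mul, ← integral_const_mul,
    ← integral_add (hint.const_mul _) (hf.const_mul _)]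
  refine integral_mono_of_nonneg (ae_of_all _ fun x => ?_) ((hint.const_mul _).add
    (hf.const_mul _)) (ae_of_all _ fun x => ?_)
  · exact mul_nonneg (hf0 x) (mul_nonneg (gaussKernel_pos ht y x).le (norm_nonneg _))
  · have := mul_le_mul_of_nonneg_left (gaussKernel_mul_norm_le_add ht ha y x) (hf0 x)
    linarith

theorem smoothed_pos (hf0 : ∀ x, 0 ≤ f x) (hf : Integrable f) (ht : t < 1) {R : ℝ}
    (hmass : (∫ x, f x) / 2 < ∫ x in {x : EuclideanSpace ℝ (Fin d) | ‖x‖ < R}, f x)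
    (y : EuclideanSpace ℝ (Fin d)) : 0 < smoothed d f t y := by
  have : 0 < 1 - t := sub_pos.2 ht
  refine lt_of_lt_of_le ?_ (setIntegral_mul_le_smoothed hf0 hf ht y R)
  have := (div_nonneg (integral_nonneg hf0) zero_le_two).trans_lt hmass
  positivity

theorem norm_fderiv_smoothed_le (hf0 : ∀ x, 0 ≤ f x) (hf : Integrable f) (ht : t < 1) {R : ℝ}
    (hR : 0 ≤ R)
    (hmass : (∫ x, f x) / 2 < ∫ x in {x : EuclideanSpace ℝ (Fin d) | ‖x‖ < R}, f x)
    (y : EuclideanSpace ℝ (Fin d)) :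
    ‖fderiv ℝ (smoothed d f t) y‖ ≤
      (‖y‖ + √t * R + 2 * √(1 - t)) / (1 - t) * smoothed d f t y := by
  have : 0 < 1 - t := sub_pos.2 ht
  set a := ‖y‖ + √t * R
  set κ := (2 * π * (1 - t)) ^ (-(d : ℝ) / 2) * exp (-a ^ 2 / (2 * (1 - t)))
  have hκ : κ * ∫ x, f x ≤ 2 * smoothed d f t y := by
    have := setIntegral_mul_le_smoothed hf0 hf ht y R
    have : 0 ≤ κ := by positivity
    nlinarith
  calc ‖fderiv ℝ (smoothed d f t) y‖
      ≤ (1 - t)⁻¹ * ∫ x, f x * (gaussKernel d t y x * ‖y - √t • x‖) :=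
        norm_fderiv_smoothed_le_integral hf0 hf ht y
    _ ≤ (1 - t)⁻¹ * (a * smoothed d f t y + √(1 - t) * (κ * ∫ x, f x)) := by
        rw [← mul_assoc]
        gcongr
        exact integral_mul_gaussKernel_mul_norm_le hf0 hf ht (by positivity) y
    _ ≤ (1 - t)⁻¹ * (a * smoothed d f t y + √(1 - t) * (2 * smoothed d f t y)) := by
        gcongr
    _ = (a + 2 * √(1 - t)) / (1 - t) * smoothed d f t y := by ring

end Smoothing

theorem condReward_eq_div (d : ℕ) (p₀ r : EuclideanSpace ℝ (Fin d) → ℝ) (t : ℝ)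
    (y : EuclideanSpace ℝ (Fin d)) :
    condReward d p₀ r t y = smoothed d (fun x => r x * p₀ x) t y / smoothed d p₀ t y := by
  simp only [condReward, post, smoothed]
  rw [← integral_div]
  congr 1
  ext x
  ring

section ConditionalReward

variable {d : ℕ} {t : ℝ} {p₀ r : EuclideanSpace ℝ (Fin d) → ℝ}

theorem condReward_nonneg (hp₀0 : ∀ x, 0 ≤ p₀ x) (hr0 : ∀ x, 0 ≤ r x) (ht : t < 1)
    (y : EuclideanSpace ℝ (Fin d)) : 0 ≤ condReward d p₀ r t y := by
  have hG : ∀ x, 0 ≤ p₀ x * gaussKernel d t y x := fun x =>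
    mul_nonneg (hp₀0 x) (gaussKernel_pos ht y x).le
  exact integral_nonneg fun x => mul_nonneg (hr0 x) (div_nonneg (hG x) (integral_nonneg hG))

theorem setIntegral_reweighted (s : Set (EuclideanSpace ℝ (Fin d))) :
    ∫ x in s, reweighted d p₀ r x = (∫ x in s, r x * p₀ x) / ∫ x, r x * p₀ x :=
  integral_div _ _

theorem norm_fderiv_condReward_le (hp₀0 : ∀ x, 0 ≤ p₀ x) (hp₀ : Integrable p₀)
    (hr0 : ∀ x, 0 ≤ r x) (hrp₀ : Integrable fun x => r x * p₀ x) (ht : t < 1) {R : ℝ}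
    (hR : 0 ≤ R)
    (hmass₀ : (∫ x, p₀ x) / 2 < ∫ x in {x : EuclideanSpace ℝ (Fin d) | ‖x‖ < R}, p₀ x)
    (hmass₁ : (∫ x, r x * p₀ x) / 2 <
      ∫ x in {x : EuclideanSpace ℝ (Fin d) | ‖x‖ < R}, r x * p₀ x)
    (y : EuclideanSpace ℝ (Fin d)) :
    ‖fderiv ℝ (condReward d p₀ r t) y‖ ≤
      2 * ((‖y‖ + √t * R + 2 * √(1 - t)) / (1 - t)) * condReward d p₀ r t y := by
  have hrp₀0 : ∀ x, 0 ≤ r x * p₀ x := fun x => mul_nonneg (hr0 x) (hp₀0 x)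
  rw [funext (condReward_eq_div d p₀ r t)]
  exact norm_fderiv_div_le (hasFDerivAt_smoothed hrp₀ ht y).differentiableAt
    (hasFDerivAt_smoothed hp₀ ht y).differentiableAt
    (norm_fderiv_smoothed_le hrp₀0 hrp₀ ht hR hmass₁ y)
    (norm_fderiv_smoothed_le hp₀0 hp₀ ht hR hmass₀ y)
    (integral_nonneg fun x => mul_nonneg (hrp₀0 x) (gaussKernel_pos ht y x).le)
    (smoothed_pos hp₀0 hp₀ ht hmass₀ y)

end ConditionalReward

/-- Universal bound on the gradient of the conditional reward:
`‖∇ρ_t(y)‖ ≤ C·ρ_t(y)·((‖y‖+√t·R)/(1−t) + d/√(1−t))` under half-mass conditions on both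
`p₀` and the reward-reweighted density `p₀^r`. -/
theorem stmt_10 :
    ∃ C : ℝ, 0 < C ∧
      ∀ (d : ℕ), 1 ≤ d →
      ∀ p₀ r : EuclideanSpace ℝ (Fin d) → ℝ,
        IsDensity p₀ → Measurable r → (∀ x, 0 ≤ r x) →
        (0 < ∫ x, r x * p₀ x) → Integrable (fun x => r x * p₀ x) →
      ∀ R : ℝ, 0 < R →
        (1 / 2 < ∫ x in {x : EuclideanSpace ℝ (Fin d) | ‖x‖ < R}, p₀ x) →
        (1 / 2 < ∫ x in {x : EuclideanSpace ℝ (Fin d) | ‖x‖ < R}, reweighted d p₀ r x) →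
      ∀ t : ℝ, t ∈ Set.Ioo (0 : ℝ) 1 →
      ∀ y : EuclideanSpace ℝ (Fin d),
        ‖gradient (fun z => condReward d p₀ r t z) y‖ ≤
          C * condReward d p₀ r t y *
            ((‖y‖ + Real.sqrt t * R) / (1 - t) + d / Real.sqrt (1 - t)) := by
  refine ⟨4, four_pos, fun d hd p₀ r ⟨_, hp₀0, hp₀1⟩ _ hr0 hZ hrp₀ R hR hmass hmassr t ⟨_, ht⟩ y =>
    ?_⟩
  have hp₀ : Integrable p₀ := Integrable.of_integral_ne_zero (by rw [hp₀1]; exact one_ne_zero)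
  have hmass₀ : (∫ x, p₀ x) / 2 < ∫ x in {x : EuclideanSpace ℝ (Fin d) | ‖x‖ < R}, p₀ x := by
    rwa [hp₀1]
  have hmass₁ : (∫ x, r x * p₀ x) / 2 <
      ∫ x in {x : EuclideanSpace ℝ (Fin d) | ‖x‖ < R}, r x * p₀ x := by
    rw [setIntegral_reweighted, lt_div_iff₀ hZ] at hmassr
    linarith
  set a := ‖y‖ + √t * R
  have hconst : 2 * ((a + 2 * √(1 - t)) / (1 - t)) ≤ 4 * (a / (1 - t) + d / √(1 - t)) := by
    have hd' : 1 / √(1 - t) ≤ d / √(1 - t) := by gcongr; exact_mod_cast hd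
    have ha : 0 ≤ a / (1 - t) := div_nonneg (by positivity) (sub_pos.2 ht).le
    rw [add_div, mul_div_assoc, sqrt_div_self']
    linarith
  rw [norm_gradient_eq_norm_fderiv]
  calc _ ≤ 2 * ((a + 2 * √(1 - t)) / (1 - t)) * condReward d p₀ r t y :=
        norm_fderiv_condReward_le hp₀0 hp₀ hr0 hrp₀ ht hR.le hmass₀ hmass₁ y
    _ ≤ 4 * (a / (1 - t) + d / √(1 - t)) * condReward d p₀ r t y :=
        mul_le_mul_of_nonneg_right hconst (condReward_nonneg hp₀0 hr0 ht y)
    _ = 4 * condReward d p₀ r t y * (a / (1 - t) + d / √(1 - t)) := by ring
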